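/- Let G be a graph with maximum degree 3 and suppose G contains an induced path P = v_1, ..., v_{2t-1} in which every vertex has degree 3 in G. Let S' be the set of all neighbors of vertices of P outside V(P), and Y the set of vertices neither in V(P) nor adjacent to V(P). Then S = S' ∪ Y is a percolating set that infects each v_i at time t - |t - i|; in particular t(G) ≥ t. -/
import Mathlib


open SimpleGraph

/-- One round of 2-neighbor bootstrap percolation: add every vertex with
at least two (distinct) infected neighbors. -/
def infectStep {V : Type} (G : SimpleGraph V) (S : Set V) : Set V :=
  S ∪ {v | ∃ u w, u ≠ w ∧ G.Adj v u ∧ G.Adj v w ∧ u ∈ S ∧ w ∈ S}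

/-- The infected set after `n` rounds starting from `S`. -/
def stage {V : Type} (G : SimpleGraph V) (S : Set V) : ℕ → Set V
  | 0 => S
  | n + 1 => infectStep G (stage G S n)

/-- `S` percolates: eventually every vertex is infected. -/
def Percolates {V : Type} (G : SimpleGraph V) (S : Set V) : Prop :=
  ∃ t, stage G S t = Set.univ

/-- The infection time of `v` (`⊤` if `v` is never infected). -/
noncomputable def infTime {V : Type} (G : SimpleGraph V) (S : Set V) (v : V) : ℕ∞ :=
  sInf {n : ℕ∞ | ∃ i : ℕ, n = (i : ℕ∞) ∧ v ∈ stage G S i}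

/-- The percolation time of a percolating set `S`. -/
noncomputable def percTime {V : Type} (G : SimpleGraph V) (S : Set V) : ℕ :=
  sInf {t | stage G S t = Set.univ}

/-- The maximum percolation time `t(G)`. -/
noncomputable def maxTime {V : Type} (G : SimpleGraph V) : ℕ :=
  sSup {t | ∃ S : Set V, Percolates G S ∧ percTime G S = t}

/-- `w` lists the vertices of an induced (chordless) path in `G`. -/
def IsInducedPath {V : Type} (G : SimpleGraph V) {n : ℕ} (w : Fin (n + 1) → V) : Prop :=
  Function.Injective w ∧
    ∀ i j : Fin (n + 1), G.Adj (w i) (w j) ↔ (i.1 + 1 = j.1 ∨ j.1 + 1 = i.1)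


lemma stage_mono {V : Type} (G : SimpleGraph V) (S : Set V) : Monotone (stage G S) := by
  apply monotone_nat_of_le_succ
  intro n v hv
  exact Or.inl hv

lemma stage_stab {V : Type} (G : SimpleGraph V) (S : Set V) {n : ℕ}
    (h : stage G S n = stage G S (n+1)) : ∀ m, n ≤ m → stage G S m = stage G S n := by
  intro m hm
  refine Nat.le_induction rfl (fun m hm ih => ?_) m hm
  show infectStep G (stage G S m) = _
  rw [ih]
  exact h.symm

lemma percTime_le_card {V : Type} [Fintype V] (G : SimpleGraph V) (S : Set V)
    (h : Percolates G S) : percTime G S ≤ Fintype.card V := by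
  obtain ⟨t0, ht0⟩ := h
  by_cases hstrict : ∀ k ≤ Fintype.card V, stage G S k ≠ stage G S (k+1)
  · exfalso
    have hcard : ∀ k, k ≤ Fintype.card V + 1 → k ≤ (stage G S k).ncard := by
      intro k
      induction k with
      | zero => simp
      | succ k ih =>
        intro hk
        have h1 := ih (by omega)
        have h2 : stage G S k ⊂ stage G S (k+1) :=
          lt_of_le_of_ne (stage_mono G S (Nat.le_succ k)) (hstrict k (by omega))
        have h3 := Set.ncard_lt_ncard h2 (Set.toFinite _)
        omega
    have h4 := hcard (Fintype.card V + 1) le_rfl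
    have hle : (stage G S (Fintype.card V + 1)).ncard ≤ Fintype.card V := by
      have := Set.ncard_le_ncard (Set.subset_univ (stage G S (Fintype.card V + 1)))
        (Set.toFinite _)
      simpa [Set.ncard_univ, Nat.card_eq_fintype_card] using this
    omega
  · push_neg at hstrict
    obtain ⟨n, hn, heq⟩ := hstrict
    have huniv : stage G S n = Set.univ := by
      rcases le_total n t0 with h' | h'
      · rw [← stage_stab G S heq t0 h', ht0]
      · exact Set.eq_univ_of_univ_subset (ht0 ▸ stage_mono G S h')
    exact le_trans (Nat.sInf_le huniv) hn

theorem stmt5 {V : Type} [Fintype V] [DecidableEq V] (G : SimpleGraph V) [DecidableRel G.Adj]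
    (hmax : ∀ u, G.degree u ≤ 3) (t : ℕ) (ht : 1 ≤ t) (w : Fin (2 * t - 1) → V)
    (hinj : Function.Injective w)
    (hindu : ∀ i j : Fin (2 * t - 1), G.Adj (w i) (w j) ↔ (i.1 + 1 = j.1 ∨ j.1 + 1 = i.1))
    (hdeg3 : ∀ i : Fin (2 * t - 1), G.degree (w i) = 3)
    (S' Y S : Set V)
    (hS' : S' = {u | u ∉ Set.range w ∧ ∃ i, G.Adj u (w i)})
    (hY : Y = {u | u ∉ Set.range w ∧ ∀ i, ¬ G.Adj u (w i)})
    (hS : S = S' ∪ Y) :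
    Percolates G S ∧
      (∀ i : Fin (2 * t - 1),
        infTime G S (w i) = ((t - ((t : ℤ) - (i.1 + 1)).natAbs : ℕ) : ℕ∞)) ∧
      t ≤ maxTime G := by
  -- S is the complement of the range of w
  have hSc : S = (Set.range w)ᶜ := by
    ext u
    simp only [hS, hS', hY, Set.mem_union, Set.mem_setOf_eq, Set.mem_compl_iff]
    constructor
    · rintro (⟨h1, _⟩ | ⟨h1, _⟩) <;> exact h1
    · intro h1
      by_cases h2 : ∃ i, G.Adj u (w i)
      · exact Or.inl ⟨h1, h2⟩
      · push_neg at h2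
        exact Or.inr ⟨h1, h2⟩
  set f : Fin (2 * t - 1) → ℕ := fun i => min (i.1 + 1) (2 * t - 1 - i.1) with hf
  have hdegF : ∀ i : Fin (2 * t - 1), (G.neighborFinset (w i)).card = 3 := fun i => hdeg3 i
  set pathF : Finset V := Finset.image w Finset.univ with hpathF
  have hmemP : ∀ u, u ∈ pathF ↔ u ∈ Set.range w := by
    intro u
    simp [hpathF, Set.mem_range]
  -- endpoints have two distinct neighbors outside the path
  have hout2 : ∀ i : Fin (2 * t - 1), (i.1 = 0 ∨ i.1 + 1 = 2 * t - 1) →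
      ∃ u₁ u₂, u₁ ≠ u₂ ∧ G.Adj (w i) u₁ ∧ G.Adj (w i) u₂ ∧
        u₁ ∉ Set.range w ∧ u₂ ∉ Set.range w := by
    intro i hi
    have hsub : ((G.neighborFinset (w i)) ∩ pathF).card ≤ 1 := by
      apply Finset.card_le_one.mpr
      intro a ha b hb
      rw [Finset.mem_inter, mem_neighborFinset, hmemP] at ha hb
      obtain ⟨ha1, j, hj⟩ := ha
      obtain ⟨hb1, k, hk⟩ := hb
      subst hj; subst hk
      rw [hindu] at ha1 hb1
      have hjk : j = k := by
        apply Fin.ext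
        have h2 := j.2; have h3 := k.2; have h4 := i.2
        omega
      rw [hjk]
    have hge : 2 ≤ ((G.neighborFinset (w i)) \ pathF).card := by
      have h1 := Finset.card_sdiff_add_card_inter (G.neighborFinset (w i)) pathF
      have h2 := hdegF i
      omega
    obtain ⟨u₁, hu₁, u₂, hu₂, hne⟩ := Finset.one_lt_card.mp hge
    rw [Finset.mem_sdiff, mem_neighborFinset, hmemP] at hu₁ hu₂
    exact ⟨u₁, u₂, hne, hu₁.1, hu₂.1, hu₁.2, hu₂.2⟩
  -- interior vertices have a neighbor outside the path
  have hout1 : ∀ i : Fin (2 * t - 1), 1 ≤ i.1 → i.1 + 1 < 2 * t - 1 →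
      ∃ u, G.Adj (w i) u ∧ u ∉ Set.range w := by
    intro i hi1 hi2
    have hsub : ((G.neighborFinset (w i)) ∩ pathF) ⊆
        {w ⟨i.1 - 1, by omega⟩, w ⟨i.1 + 1, by omega⟩} := by
      intro a ha
      rw [Finset.mem_inter, mem_neighborFinset, hmemP] at ha
      obtain ⟨ha1, j, hj⟩ := ha
      subst hj
      rw [hindu] at ha1
      rcases ha1 with h | h
      · have hjk : j = (⟨i.1 + 1, by omega⟩ : Fin (2 * t - 1)) :=
          Fin.ext (show j.1 = i.1 + 1 by omega)
        rw [hjk]; simp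
      · have hjk : j = (⟨i.1 - 1, by omega⟩ : Fin (2 * t - 1)) :=
          Fin.ext (show j.1 = i.1 - 1 by omega)
        rw [hjk]; simp
    have hc2 : ((G.neighborFinset (w i)) ∩ pathF).card ≤ 2 := by
      refine le_trans (Finset.card_le_card hsub) ?_
      refine le_trans (Finset.card_insert_le _ _) ?_
      simp
    have hge : 1 ≤ ((G.neighborFinset (w i)) \ pathF).card := by
      have h1 := Finset.card_sdiff_add_card_inter (G.neighborFinset (w i)) pathF
      have h2 := hdegF i
      omega
    obtain ⟨u, hu⟩ := Finset.card_pos.mp hge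
    rw [Finset.mem_sdiff, mem_neighborFinset, hmemP] at hu
    exact ⟨u, hu.1, hu.2⟩
  -- the key structural lemma
  have key : ∀ m : ℕ, stage G S m = S ∪ (w '' {i | f i ≤ m}) := by
    intro m
    induction m with
    | zero =>
      have hempty : {i : Fin (2 * t - 1) | f i ≤ 0} = ∅ := by
        ext i
        simp only [Set.mem_setOf_eq, Set.mem_empty_iff_false, iff_false, hf]
        have h2 := i.2
        omega
      show S = _
      rw [hempty]
      simp
    | succ m ih =>
      show infectStep G (stage G S m) = _
      rw [ih]
      ext v
      simp only [infectStep, Set.mem_union, Set.mem_setOf_eq]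
      constructor
      · rintro (hv | ⟨u₁, u₂, hne, hadj1, hadj2, hu₁, hu₂⟩)
        · rcases hv with hv | ⟨i, hi, rfl⟩
          · exact Or.inl hv
          · refine Or.inr ⟨i, ?_, rfl⟩
            simp only [Set.mem_setOf_eq] at hi ⊢
            omega
        · by_cases hvS : v ∈ S
          · exact Or.inl hvS
          · right
            have hvr : v ∈ Set.range w := by
              rw [hSc] at hvS; simpa using hvS
            obtain ⟨i, rfl⟩ := hvr
            refine ⟨i, ?_, rfl⟩
            simp only [Set.mem_setOf_eq]
            by_contra hfi
            push_neg at hfi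
            have hfi' : i.1 + 1 ≥ m + 2 ∧ 2 * t - 1 - i.1 ≥ m + 2 := by
              simp only [hf] at hfi; omega
            have hint1 : 1 ≤ i.1 := by omega
            have hint2 : i.1 + 1 < 2 * t - 1 := by have := i.2; omega
            set a : Fin (2 * t - 1) := ⟨i.1 - 1, by omega⟩ with ha
            set b : Fin (2 * t - 1) := ⟨i.1 + 1, by omega⟩ with hb
            have hadja : G.Adj (w i) (w a) := by
              rw [hindu]; right; simp only [ha]; omega
            have hadjb : G.Adj (w i) (w b) := by
              rw [hindu]; left; simp only [hb]
            have hnotmem : ∀ c : Fin (2 * t - 1), m + 1 ≤ f c →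
                w c ∉ S ∪ (w '' {j | f j ≤ m}) := by
              intro c hc hmem
              rcases hmem with hmem | ⟨j, hj, hjc⟩
              · rw [hSc] at hmem; exact hmem ⟨c, rfl⟩
              · have hjc' : j = c := hinj hjc
                subst hjc'
                simp only [Set.mem_setOf_eq] at hj
                omega
            have hfa : m + 1 ≤ f a := by simp only [hf, ha]; omega
            have hfb : m + 1 ≤ f b := by simp only [hf, hb]; omega
            have hu₁' : u₁ ≠ w a ∧ u₁ ≠ w b := by
              constructor <;> rintro rfl
              · exact hnotmem a hfa hu₁
              · exact hnotmem b hfb hu₁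
            have hu₂' : u₂ ≠ w a ∧ u₂ ≠ w b := by
              constructor <;> rintro rfl
              · exact hnotmem a hfa hu₂
              · exact hnotmem b hfb hu₂
            have hab : w a ≠ w b := by
              intro hh
              have hab' : a = b := hinj hh
              simp only [ha, hb, Fin.mk.injEq] at hab'
              omega
            have hsubn : ({u₁, u₂, w a, w b} : Finset V) ⊆ G.neighborFinset (w i) := by
              intro x hx
              simp only [Finset.mem_insert, Finset.mem_singleton] at hx
              rw [mem_neighborFinset]
              rcases hx with rfl | rfl | rfl | rfl
              · exact hadj1
              · exact hadj2
              · exact hadja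
              · exact hadjb
            have hcard4 : ({u₁, u₂, w a, w b} : Finset V).card = 4 := by
              rw [Finset.card_insert_of_notMem (by simp [hne, hu₁'.1, hu₁'.2]),
                Finset.card_insert_of_notMem (by simp [hu₂'.1, hu₂'.2]),
                Finset.card_insert_of_notMem (by simp [hab])]
              simp
            have hle := Finset.card_le_card hsubn
            rw [hcard4, hdegF i] at hle
            omega
      · rintro (hv | ⟨i, hi, rfl⟩)
        · exact Or.inl (Or.inl hv)
        · simp only [Set.mem_setOf_eq] at hi
          by_cases him : f i ≤ m
          · exact Or.inl (Or.inr ⟨i, him, rfl⟩)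
          · have hfi : f i = m + 1 := by omega
            right
            by_cases hend : i.1 = 0 ∨ i.1 + 1 = 2 * t - 1
            · obtain ⟨u₁, u₂, hne, h1, h2, hr1, hr2⟩ := hout2 i hend
              refine ⟨u₁, u₂, hne, h1, h2, Or.inl ?_, Or.inl ?_⟩
              · rw [hSc]; simpa using hr1
              · rw [hSc]; simpa using hr2
            · push_neg at hend
              have hint1 : 1 ≤ i.1 := by omega
              have hint2 : i.1 + 1 < 2 * t - 1 := by
                have := i.2; omega
              obtain ⟨u, hu, hur⟩ := hout1 i hint1 hint2
              have hc : ∃ c : Fin (2 * t - 1), G.Adj (w i) (w c) ∧ f c ≤ m := by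
                by_cases hside : i.1 + 1 ≤ 2 * t - 1 - i.1
                · refine ⟨⟨i.1 - 1, by omega⟩, ?_, ?_⟩
                  · rw [hindu]; right; simp only; omega
                  · simp only [hf] at hfi ⊢
                    omega
                · refine ⟨⟨i.1 + 1, by omega⟩, ?_, ?_⟩
                  · rw [hindu]; left; simp only
                  · simp only [hf] at hfi ⊢
                    omega
              obtain ⟨c, hcadj, hcf⟩ := hc
              refine ⟨u, w c, ?_, hu, hcadj, Or.inl (by rw [hSc]; simpa using hur),
                Or.inr ⟨c, hcf, rfl⟩⟩
              rintro rfl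
              exact hur ⟨c, rfl⟩
  -- every path vertex is infected by time t
  have hft : ∀ i : Fin (2 * t - 1), f i ≤ t := by
    intro i
    have h2 := i.2
    simp only [hf]
    omega
  have hstaget : stage G S t = Set.univ := by
    rw [key t]
    ext v
    simp only [Set.mem_univ, iff_true, Set.mem_union]
    by_cases hv : v ∈ Set.range w
    · obtain ⟨i, rfl⟩ := hv
      exact Or.inr ⟨i, hft i, rfl⟩
    · left; rw [hSc]; exact hv
  have hperc : Percolates G S := ⟨t, hstaget⟩
  refine ⟨hperc, ?_, ?_⟩
  · intro i
    have hci : (t - ((t : ℤ) - (i.1 + 1)).natAbs : ℕ) = f i := by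
      have h2 := i.2
      simp only [hf]
      omega
    rw [hci]
    apply le_antisymm
    · apply sInf_le
      refine ⟨f i, rfl, ?_⟩
      rw [key (f i)]
      exact Or.inr ⟨i, le_refl (f i), rfl⟩
    · apply le_sInf
      rintro x ⟨k, rfl, hk⟩
      rw [key k] at hk
      rcases hk with hk | ⟨j, hj, hjw⟩
      · rw [hSc] at hk
        exact absurd ⟨i, rfl⟩ hk
      · have hji : j = i := hinj hjw
        subst hji
        simp only [Set.mem_setOf_eq] at hj
        exact_mod_cast hj
  · have hpt : percTime G S = t := by
      apply le_antisymm (Nat.sInf_le hstaget)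
      by_contra hlt
      push_neg at hlt
      have hmem := Nat.sInf_mem (⟨t, hstaget⟩ : {m | stage G S m = Set.univ}.Nonempty)
      have hpuniv : stage G S (percTime G S) = Set.univ := hmem
      have hmid : w ⟨t - 1, by omega⟩ ∈ stage G S (percTime G S) := by
        rw [hpuniv]; trivial
      rw [key (percTime G S)] at hmid
      rcases hmid with hmem' | ⟨j, hj, hjw⟩
      · rw [hSc] at hmem'
        exact hmem' ⟨_, rfl⟩
      · have hji : j = (⟨t - 1, by omega⟩ : Fin (2 * t - 1)) := hinj hjw
        subst hji
        simp only [Set.mem_setOf_eq, hf] at hj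
        have heq : sInf {m | stage G S m = Set.univ} = percTime G S := rfl
        omega
    have hbdd : BddAbove {m | ∃ T : Set V, Percolates G T ∧ percTime G T = m} := by
      refine ⟨Fintype.card V, ?_⟩
      rintro m ⟨T, hT, rfl⟩
      exact percTime_le_card G T hT
    have hmem : t ∈ {m | ∃ T : Set V, Percolates G T ∧ percTime G T = m} := ⟨S, hperc, hpt⟩
    exact le_csSup hbdd hmem
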